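/- arXiv:1711.03515 — 6 statements merged into one kernel-verified Lean document; each statement's English description precedes it below -/
import Mathlib

section
/- Let S be a ring with no zero divisors (not necessarily commutative), let π : S → S be a ring automorphism, and let R = {a ∈ S : π(a) = a} be its fixed subring. Then for every f ∈ R one has Sf ∩ R = Rf, i.e., the contraction to R of the left ideal of S generated by f equals the left ideal of R generated by f. -/
theorem apply_eq_self_of_apply_mul_eq_self {M F : Type*} [MonoidWithZero M] [IsRightCancelMulZero M]
    [FunLike F M M] [MonoidHomClass F M M] {σ : F} {f g : M} (hf : σ f = f) (hf0 : f ≠ 0)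
    (hgf : σ (g * f) = g * f) : σ g = g :=
  mul_right_cancel₀ hf0 (by rwa [map_mul, hf] at hgf)

/-- Let `S` be a ring with no zero divisors, `π : S → S` a ring automorphism
and `R = {a ∈ S : π a = a}` its fixed subring. Then for every `f ∈ R`, the contraction to `R`
of the left ideal `S·f` equals the left ideal `R·f`:  `Sf ∩ R = Rf`. -/
theorem fixed_subring_contraction_of_principal_left_ideal
    (S : Type*) [Ring S] [NoZeroDivisors S] (π : S ≃+* S) (f : S) (hf : π f = f) :
    {y : S | (∃ g : S, y = g * f) ∧ π y = y} = {y : S | ∃ g : S, π g = g ∧ y = g * f} := by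
  ext y
  constructor
  · rintro ⟨⟨g, rfl⟩, hgf⟩
    by_cases hf0 : f = 0
    · exact ⟨0, map_zero π, by rw [hf0, mul_zero, mul_zero]⟩
    · exact ⟨g, apply_eq_self_of_apply_mul_eq_self hf hf0 hgf, rfl⟩
  · rintro ⟨g, hg, rfl⟩
    exact ⟨⟨g, rfl⟩, by rw [map_mul, hf, hg]⟩
end

section
/- Let M be a field and θ a field automorphism of M of finite order n whose fixed field is K = M^θ, and let {α_0, α_1, …, α_{n−1}} be a K-basis of M. Then for every t ≤ n and every choice of t distinct indices k_1, k_2, …, k_t ∈ {0, 1, …, n−1}, the t×t matrix whose (i,j) entry is θ^{j−1}(α_{k_i}) (1 ≤ i, j ≤ t) has nonzero determinant. -/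
/-! Skew polynomials over a field `M` twisted by a ring automorphism `θ` (`x·a = θ(a)·x`),
modeled as finitely supported functions `ℕ →₀ M` (coefficient of `xⁱ` at `i`),
with left-coefficient multiplication `(Σᵢ aᵢ xⁱ)·(Σⱼ bⱼ xʲ) = Σᵢⱼ aᵢ θⁱ(bⱼ) x^{i+j}`. -/

variable {M : Type*} [Field M]

/-- Multiplication of skew polynomials: `f * g` in `M[x;θ]`. -/
noncomputable def sMul (θ : M ≃+* M) (f g : ℕ →₀ M) : ℕ →₀ M :=
  f.sum fun i a => g.sum fun j b => Finsupp.single (i + j) (a * (θ ^ i) b)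

/-- The skew polynomial `x - γ`. -/
noncomputable def Xsub (γ : M) : ℕ →₀ M := Finsupp.single 1 1 - Finsupp.single 0 γ

/-- The skew polynomial `xⁿ - 1`. -/
noncomputable def XnSubOne (n : ℕ) : ℕ →₀ M := Finsupp.single n 1 - Finsupp.single 0 1

/-- The left ideal `S·f = {q·f : q ∈ S}` of `S = M[x;θ]`. -/
def lIdeal (θ : M ≃+* M) (f : ℕ →₀ M) : Set (ℕ →₀ M) := {h | ∃ q, h = sMul θ q f}

/-- `g` right-divides `f` in `M[x;θ]`, i.e. `f ∈ S·g`. -/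
def rdvd (θ : M ≃+* M) (g f : ℕ →₀ M) : Prop := f ∈ lIdeal θ g

/-- The fixed subfield of an automorphism. -/
noncomputable def fixedSubfield (φ : M ≃+* M) : Subfield M where
  carrier := {a | φ a = a}
  zero_mem' := map_zero φ
  one_mem' := map_one φ
  add_mem' := by intro a b ha hb; simp only [Set.mem_setOf_eq, map_add] at *; rw [ha, hb]
  mul_mem' := by intro a b ha hb; simp only [Set.mem_setOf_eq, map_mul] at *; rw [ha, hb]
  neg_mem' := by intro a ha; simp only [Set.mem_setOf_eq, map_neg] at *; rw [ha]
  inv_mem' := by intro a ha; simp only [Set.mem_setOf_eq, map_inv₀] at *; rw [ha]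

/-- A skew polynomial lies in the subring `R` of polynomials whose coefficients are fixed
by the automorphism `φ` (for `φ = θ^μ = π`, this is `R = L[x;σ]` with `L = M^π`). -/
def inR (φ : M ≃+* M) (f : ℕ →₀ M) : Prop := ∀ j, φ (f j) = f j

/-- The polynomial of degree `< n` with coefficient vector `c`. -/
noncomputable def vecPoly {n : ℕ} (c : Fin n → M) : ℕ →₀ M :=
  ∑ j : Fin n, Finsupp.single (j : ℕ) (c j)

/-- Hamming weight of a vector. -/
noncomputable def hWt {n : ℕ} (c : Fin n → M) : ℕ := Set.ncard {j : Fin n | c j ≠ 0}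

/-- `α` generates a normal basis `{α, θ(α), …, θ^{n-1}(α)}` of `M` over `K = M^θ`. -/
def NormalBasis (θ : M ≃+* M) (n : ℕ) (α : M) : Prop :=
  LinearIndependent (fixedSubfield θ) (fun i : Fin n => (θ ^ (i : ℕ)) α) ∧
    Submodule.span (fixedSubfield θ) (Set.range fun i : Fin n => (θ ^ (i : ℕ)) α) = ⊤

/-- `f` is monic of degree `d`. -/
def IsMonicAt (f : ℕ →₀ M) (d : ℕ) : Prop := f d = 1 ∧ ∀ j, d < j → f j = 0

/-- `f` is monic. -/
def IsMonic (f : ℕ →₀ M) : Prop := ∃ d, IsMonicAt f d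

/-- Coefficientwise application of an automorphism to a skew polynomial (`f ↦ f^φ`). -/
noncomputable def pmap (φ : M ≃+* M) (f : ℕ →₀ M) : ℕ →₀ M :=
  Finsupp.mapRange φ (map_zero φ) f

/-! If `v₀, …, v_d` are independent over `K = M^θ`, the matrix `(θʲ vᵢ)` is invertible: otherwise
a nonzero operator `L = ∑_{j ≤ d} cⱼ θʲ` kills every `vᵢ`. Since `L v₀ = 0`, summation by parts gives
`L (v₀ y) = L' (θ y - y)` for an operator `L' ≠ 0` of order `d - 1`, so `L'` kills the elements
`θ wᵢ - wᵢ`, `wᵢ = vᵢ / v₀` (`i ≥ 1`). These are again `K`-independent, because the kernel of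
`θ - 1` is `K`, which meets the span of the `wᵢ` trivially. Induct on `d`. -/

open Finset

lemma exists_sum_range_ne_zero {G : Type*} [AddCommGroup G] (b : ℕ → G) (d : ℕ)
    (hb : ∃ j ≤ d + 1, b j ≠ 0) (hsum : ∑ i ∈ range (d + 2), b i = 0) :
    ∃ j ≤ d, ∑ i ∈ range (j + 1), b i ≠ 0 := by
  by_contra! h
  have hS : ∀ k ≤ d + 2, ∑ i ∈ range k, b i = 0 := by
    rintro (_ | k) hk
    · simp
    · rcases (by omega : k ≤ d ∨ k = d + 1) with hk | rfl
      · exact h k hk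
      · exact hsum
  obtain ⟨j, hj, hbj⟩ := hb
  rw [← sum_range_succ_sub_sum b, hS _ (by omega), hS _ (by omega), sub_zero] at hbj
  exact hbj rfl

section Casoratian

variable (θ : M ≃+* M)

lemma mem_fixedSubfield {x : M} : x ∈ fixedSubfield θ ↔ θ x = x := Iff.rfl

def fixedLinearMap : M →ₗ[fixedSubfield θ] M where
  toFun := θ
  map_add' := map_add θ
  map_smul' k x := by
    simp only [Subfield.smul_def, smul_eq_mul, map_mul, RingHom.id_apply,
      (mem_fixedSubfield θ).mp k.2]

@[simp]
lemma fixedLinearMap_apply (x : M) : fixedLinearMap θ x = θ x := rfl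

lemma linearIndependent_apply_sub_self {ι : Type*} {w : ι → M}
    (hw : LinearIndependent (fixedSubfield θ) w)
    (h1 : (1 : M) ∉ Submodule.span (fixedSubfield θ) (Set.range w)) :
    LinearIndependent (fixedSubfield θ) fun i => θ (w i) - w i := by
  set D : M →ₗ[fixedSubfield θ] M := fixedLinearMap θ - LinearMap.id
  have hdisj : Disjoint (Submodule.span (fixedSubfield θ) (Set.range w)) (LinearMap.ker D) := by
    refine Submodule.disjoint_def.mpr fun x hx hfix => ?_
    have hθx : θ x = x := by simpa [D, sub_eq_zero] using hfix
    by_contra hx0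
    have h1x : (1 : M) = (⟨x, hθx⟩⁻¹ : fixedSubfield θ) • x := (inv_mul_cancel₀ hx0).symm
    exact h1 (h1x ▸ Submodule.smul_mem _ _ hx)
  have hfun : (fun i => θ (w i) - w i) = D ∘ w := by
    ext i
    simp [D]
  rw [hfun]
  exact hw.map hdisj

lemma sum_mul_pow_apply_eq_of_sum_eq_zero (b : ℕ → M) (d : ℕ)
    (hb : ∑ i ∈ range (d + 2), b i = 0) (y : M) :
    ∑ j ∈ range (d + 2), b j * (θ ^ j) y
      = ∑ j ∈ range (d + 1), (-∑ i ∈ range (j + 1), b i) * (θ ^ j) (θ y - y) := by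
  have h := sum_range_by_parts (fun j => (θ ^ j) y) b (d + 2)
  simp only [smul_eq_mul, hb, mul_zero, zero_sub] at h
  simp_rw [mul_comm (b _)]
  rw [h, ← sum_neg_distrib]
  refine sum_congr rfl fun j _ => ?_
  have hsucc : (θ ^ (j + 1)) y = (θ ^ j) (θ y) := by rw [pow_succ]; rfl
  rw [hsucc, map_sub]
  ring

theorem exists_sum_mul_pow_apply_ne_zero (d : ℕ) (c : ℕ → M) (hc : ∃ j ≤ d, c j ≠ 0)
    (v : Fin (d + 1) → M) (hv : LinearIndependent (fixedSubfield θ) v) :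
    ∃ i, ∑ j ∈ range (d + 1), c j * (θ ^ j) (v i) ≠ 0 := by
  induction d generalizing c with
  | zero =>
    obtain ⟨j, hj, hcj⟩ := hc
    obtain rfl : j = 0 := by omega
    exact ⟨0, by simpa using mul_ne_zero hcj (hv.ne_zero 0)⟩
  | succ d ih =>
    by_contra! hker
    have hβ : v 0 ≠ 0 := hv.ne_zero 0
    set b : ℕ → M := fun j => c j * (θ ^ j) (v 0)
    set q : ℕ → M := fun j => -∑ i ∈ range (j + 1), b i
    have hq : ∃ j ≤ d, q j ≠ 0 := by
      obtain ⟨j, hj, hcj⟩ := hc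
      obtain ⟨j', hj', hsum⟩ := exists_sum_range_ne_zero b d
        ⟨j, hj, mul_ne_zero hcj ((map_ne_zero _).mpr hβ)⟩ (hker 0)
      exact ⟨j', hj', neg_ne_zero.mpr hsum⟩
    set w : Fin (d + 1) → M := fun i => v i.succ / v 0
    have hw_cons : LinearIndependent (fixedSubfield θ) (Fin.cons 1 w : Fin (d + 2) → M) := by
      have hcons : (Fin.cons 1 w : Fin (d + 2) → M) =
          LinearMap.mulRight (fixedSubfield θ) (v 0)⁻¹ ∘ v := by
        funext i
        refine Fin.cases ?_ (fun i => ?_) i <;> simp [w, div_eq_mul_inv, hβ]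
      rw [hcons]
      exact hv.map' _ (LinearMap.ker_eq_bot.mpr (mul_left_injective₀ (inv_ne_zero hβ)))
    obtain ⟨hw, h1⟩ := linearIndependent_finCons.mp hw_cons
    obtain ⟨i, hi⟩ := ih q hq _ (linearIndependent_apply_sub_self θ hw h1)
    refine hi ?_
    calc ∑ j ∈ range (d + 1), q j * (θ ^ j) (θ (w i) - w i)
        = ∑ j ∈ range (d + 2), b j * (θ ^ j) (w i) :=
          (sum_mul_pow_apply_eq_of_sum_eq_zero θ b d (hker 0) _).symm
      _ = ∑ j ∈ range (d + 2), c j * (θ ^ j) (v i.succ) := sum_congr rfl fun j _ => by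
          rw [mul_assoc, ← map_mul, mul_div_cancel₀ _ hβ]
      _ = 0 := hker i.succ

theorem det_pow_apply_ne_zero_of_linearIndependent {m : ℕ} {v : Fin m → M}
    (hv : LinearIndependent (fixedSubfield θ) v) :
    (Matrix.of fun i j : Fin m => (θ ^ (j : ℕ)) (v i)).det ≠ 0 := by
  intro hdet
  obtain ⟨c, hc, hcv⟩ := Matrix.exists_mulVec_eq_zero_iff.mpr hdet
  cases m with
  | zero => exact hc (Subsingleton.elim c 0)
  | succ d =>
    set c' : ℕ → M := fun j => if h : j < d + 1 then c ⟨j, h⟩ else 0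
    obtain ⟨j₀, hj₀⟩ := Function.ne_iff.mp hc
    obtain ⟨i, hi⟩ := exists_sum_mul_pow_apply_ne_zero θ d c'
      ⟨j₀, by omega, by simpa [c', Fin.is_le] using hj₀⟩ v hv
    refine hi ?_
    rw [← Fin.sum_univ_eq_sum_range (fun j => c' j * (θ ^ j) (v i))]
    simpa [c', Fin.is_le, Matrix.mulVec, dotProduct, mul_comm] using congrFun hcv i

end Casoratian

theorem circulant_lemma_general {M : Type*} [Field M] (θ : M ≃+* M) (n : ℕ)
    (α : Fin n → M)
    (hli : LinearIndependent (fixedSubfield θ) α)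
    (t : ℕ) (k : Fin t → Fin n) (hk : Function.Injective k) :
    (Matrix.of fun i j : Fin t => (θ ^ (j : ℕ)) (α (k i))).det ≠ 0 :=
  det_pow_apply_ne_zero_of_linearIndependent θ (hli.comp k hk)

/-- **Circulant Lemma.** If `θ` is a field automorphism of `M` of finite order `n`
with fixed field `K = M^θ`, `{α₀, …, α_{n-1}}` is a `K`-basis of `M`, `t ≤ n` and
`k₁, …, k_t ∈ {0, …, n-1}` are distinct indices, then the `t × t` matrix with `(i,j)` entry
`θ^{j-1}(α_{k_i})` has nonzero determinant. -/
theorem circulant_lemma {M : Type*} [Field M] (θ : M ≃+* M) (n : ℕ)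
    (hord : orderOf θ = n) (α : Fin n → M)
    (hli : LinearIndependent (fixedSubfield θ) α)
    (hsp : Submodule.span (fixedSubfield θ) (Set.range α) = ⊤)
    (t : ℕ) (ht : t ≤ n) (k : Fin t → Fin n) (hk : Function.Injective k) :
    (Matrix.of fun i j : Fin t => (θ ^ (j : ℕ)) (α (k i))).det ≠ 0 :=
  circulant_lemma_general θ n α hli t k hk
end

section
/- Let {α_0, …, α_{n−1}} be a K-basis of M, let t ≥ 1 and r ≥ 0 with t + r ≤ n, let k_1, …, k_{t+r} ∈ {0, 1, …, n−1} be distinct indices, and let s_1, s_2 be positive integers with gcd(s_1, n) = 1 and gcd(s_2, n) < t + 1. Let A be the (t+r)×t matrix whose (i,j) entry is θ^{(j−1)s_1}(α_{k_i}), and for 0 ≤ i ≤ r let B_i = ( A | θ^{s_2}(A) | θ^{2s_2}(A) | ⋯ | θ^{i s_2}(A) ) be the block matrix obtained by concatenating the matrices θ^{ℓ s_2}(A) (θ applied to A entrywise). Then rank(B_i) ≥ t + i for every i = 0, …, r. -/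
/-! Skew polynomials over a field `M` twisted by a ring automorphism `θ` (`x·a = θ(a)·x`),
modeled as finitely supported functions `ℕ →₀ M` (coefficient of `xⁱ` at `i`),
with left-coefficient multiplication `(Σᵢ aᵢ xⁱ)·(Σⱼ bⱼ xʲ) = Σᵢⱼ aᵢ θⁱ(bⱼ) x^{i+j}`. -/

variable {M : Type*} [Field M]

/-! For `e : ℕ` let `v_e ∈ M^{t+r}` be the column `(θ^e (α (k row)))_row`. The `n × n` matrix
`(θ^e (α m))` is invertible by Dedekind's independence of characters, so no nonzero vector is
orthogonal to every `v_e`.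

If a proper subspace `V ⊆ M^{t+r}` is stable under the entrywise action of an automorphism `φ` of
finite order, its orthogonal complement is `φ`-stable too, and averaging over `⟨φ⟩` yields a
nonzero `φ`-fixed vector `h ⊥ V`. For `φ = θ^{s₁}` and `v_0 ∈ V`, or `φ = θ^{s₂}` and
`v_0, v_{s₁}, …, v_{(t-1)s₁} ∈ V`, the gcd conditions write every `v_e` as a power of `φ` applied to
one of these vectors, so `h` would be orthogonal to all `v_e`. Hence adjoining the `φ`-images of
the current columns raises the rank until the columns span `M^{t+r}`: first with `φ = θ^{s₁}`
inside `A`, then with `φ = θ^{s₂}` from block to block. -/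

open Module Submodule

theorem RingEquiv.map_dotProduct {ι : Type*} [Fintype ι] (g : M ≃+* M) (v w : ι → M) :
    g (v ⬝ᵥ w) = (⇑g ∘ v) ⬝ᵥ (⇑g ∘ w) :=
  RingHom.map_dotProduct g.toRingHom v w

theorem linearIndependent_pow_apply_of_span_eq_top (θ : M ≃+* M) {ι : Type*} {α : ι → M}
    (hsp : span (fixedSubfield θ) (Set.range α) = ⊤) :
    LinearIndependent M fun (e : Fin (orderOf θ)) (m : ι) => (θ ^ (e : ℕ)) (α m) := by
  let K := fixedSubfield θ
  let θK (e : ℕ) : M →ₐ[K] M := (AlgEquiv.ofRingEquiv (f := θ ^ e) fun x : K => by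
    change (θ ^ e) (x : M) = x
    rw [RingAut.coe_pow]
    exact Function.iterate_fixed x.2 e).toAlgHom
  have hθK : Function.Injective fun e : Fin (orderOf θ) => θK e := by
    intro a b hab
    refine Fin.ext (pow_injOn_Iio_orderOf a.2 b.2 (RingEquiv.ext fun x => ?_))
    simpa [θK] using DFunLike.congr_fun hab x
  let eval : (M →ₗ[K] M) →ₗ[M] (ι → M) := LinearMap.pi fun m => LinearMap.applyₗ' M (α m)
  have heval : LinearMap.ker eval = ⊥ :=
    LinearMap.ker_eq_bot'.2 fun f hf => LinearMap.ext_on_range hsp fun m => congr_fun hf m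
  exact ((linearIndependent_toLinearMap K M M).comp _ hθK).map' eval heval

theorem eq_zero_of_forall_dotProduct_pow_comp_eq_zero {θ : M ≃+* M} {n : ℕ}
    (hord : orderOf θ = n) {α : Fin n → M} (hsp : span (fixedSubfield θ) (Set.range α) = ⊤)
    {ι : Type*} [Fintype ι] {k : ι → Fin n} (hk : Function.Injective k) {h : ι → M}
    (hh : ∀ e : ℕ, h ⬝ᵥ (⇑(θ ^ e) ∘ α ∘ k) = 0) : h = 0 := by
  subst hord
  let G : Matrix (Fin (orderOf θ)) (Fin (orderOf θ)) M := .of fun e m => (θ ^ (e : ℕ)) (α m)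
  have hG : IsUnit G :=
    Matrix.linearIndependent_rows_iff_isUnit.1 (linearIndependent_pow_apply_of_span_eq_top θ hsp)
  have hcols := (Matrix.linearIndependent_cols_iff_isUnit.2 hG).comp k hk
  funext row
  refine Fintype.linearIndependent_iff.1 hcols h ?_ row
  funext e
  simpa [G, dotProduct, mul_comm] using hh e

theorem exists_ne_zero_forall_dotProduct_eq_zero {ι : Type*} [Fintype ι]
    {C : Submodule M (ι → M)} (hC : C ≠ ⊤) : ∃ h : ι → M, h ≠ 0 ∧ ∀ c ∈ C, h ⬝ᵥ c = 0 := by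
  classical
  obtain ⟨f, hf, hCf⟩ := C.exists_le_ker_of_lt_top hC.lt_top
  refine ⟨(dotProductEquiv M ι).symm f, by simpa using hf, fun c hc => ?_⟩
  calc (dotProductEquiv M ι).symm f ⬝ᵥ c = dotProductEquiv M ι ((dotProductEquiv M ι).symm f) c :=
        rfl
    _ = 0 := by rw [LinearEquiv.apply_symm_apply]; exact hCf hc

theorem exists_sum_apply_mul_ne_zero (G : Subgroup (M ≃+* M)) [Fintype G] {x : M} (hx : x ≠ 0) :
    ∃ β : M, ∑ g : G, (g : M ≃+* M) (β * x) ≠ 0 := by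
  by_contra! h
  let χ (g : G) : M →* M := (g : M ≃+* M).toMonoidHom
  have hχ : Function.Injective χ := fun g g' hgg' =>
    Subtype.ext (RingEquiv.ext fun y => DFunLike.congr_fun hgg' y)
  have := Fintype.linearIndependent_iff.1 ((linearIndependent_monoidHom M M).comp χ hχ)
    (fun g => (g : M ≃+* M) x) (by funext β; simpa [χ, mul_comm] using h β) 1
  exact hx (by simpa using this)

theorem exists_fixed_ne_zero_forall_dotProduct_eq_zero (G : Subgroup (M ≃+* M)) [Finite G]
    {ι : Type*} [Fintype ι] {C : Submodule M (ι → M)} (hGC : ∀ g ∈ G, ∀ c ∈ C, ⇑g ∘ c ∈ C)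
    (hC : C ≠ ⊤) :
    ∃ h : ι → M, h ≠ 0 ∧ (∀ g ∈ G, ⇑g ∘ h = h) ∧ ∀ c ∈ C, h ⬝ᵥ c = 0 := by
  cases nonempty_fintype G
  obtain ⟨d, hd, hdC⟩ := exists_ne_zero_forall_dotProduct_eq_zero hC
  have hGd : ∀ g ∈ G, ∀ c ∈ C, (⇑g ∘ d) ⬝ᵥ c = 0 := by
    intro g hg c hc
    have hc' : ⇑g ∘ (⇑g⁻¹ ∘ c) = c := by funext; simp [RingAut.inv_apply]
    rw [← hc', ← RingEquiv.map_dotProduct, hdC _ (hGC _ (G.inv_mem hg) c hc), map_zero]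
  obtain ⟨row₀, hrow₀⟩ := Function.ne_iff.1 hd
  obtain ⟨β, hβ⟩ := exists_sum_apply_mul_ne_zero G hrow₀
  refine ⟨fun row => ∑ g : G, (g : M ≃+* M) (β * d row), fun h0 => hβ (congr_fun h0 row₀),
    fun g hg => ?_, fun c hc => ?_⟩
  · funext row
    simp only [Function.comp_apply, map_sum]
    exact Fintype.sum_equiv (Equiv.mulLeft ⟨g, hg⟩) _ _ fun _ => rfl
  · calc (fun row => ∑ g : G, (g : M ≃+* M) (β * d row)) ⬝ᵥ c
        = ∑ g : G, (g : M ≃+* M) β * ((⇑(g : M ≃+* M) ∘ d) ⬝ᵥ c) := by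
          simp only [dotProduct, Finset.sum_mul, Finset.mul_sum, map_mul, Function.comp_apply,
            mul_assoc]
          exact Finset.sum_comm
      _ = 0 := Finset.sum_eq_zero fun g _ => by rw [hGd g g.2 c hc, mul_zero]

theorem comp_mem_of_mem_zpowers {φ : M ≃+* M} (hφ : IsOfFinOrder φ) {ι : Type*}
    {C : Submodule M (ι → M)} (hC : ∀ c ∈ C, ⇑φ ∘ c ∈ C) {g : M ≃+* M}
    (hg : g ∈ Subgroup.zpowers φ) {c : ι → M} (hc : c ∈ C) : ⇑g ∘ c ∈ C := by
  obtain ⟨m, rfl⟩ : ∃ m : ℕ, φ ^ m = g := hφ.mem_powers_iff_mem_zpowers.2 hg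
  clear hg
  induction m with
  | zero => simpa using hc
  | succ m ih => rw [pow_succ']; exact hC _ ih

theorem dotProduct_comp_eq_zero_of_comp_eq {ι : Type*} [Fintype ι] {g : M ≃+* M} {h v : ι → M}
    (hg : ⇑g ∘ h = h) (hv : h ⬝ᵥ v = 0) : h ⬝ᵥ (⇑g ∘ v) = 0 := by
  conv_lhs => rw [← hg]
  rw [← RingEquiv.map_dotProduct, hv, map_zero]

section Krylov

variable {ι : Type*} (φ : M ≃+* M) (S : Set (ι → M))

def krylovSet (m : ℕ) : Set (ι → M) := {v | ∃ ℓ ≤ m, ∃ s ∈ S, v = ⇑(φ ^ ℓ) ∘ s}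

theorem subset_krylovSet (m : ℕ) : S ⊆ krylovSet φ S m :=
  fun s hs => ⟨0, m.zero_le, s, hs, by simp⟩

theorem krylovSet_mono : Monotone (krylovSet φ S) :=
  fun _ _ hmm' _ ⟨ℓ, hℓ, s, hs, hv⟩ => ⟨ℓ, hℓ.trans hmm', s, hs, hv⟩

theorem comp_mem_span_krylovSet_succ {m : ℕ} {c : ι → M} (hc : c ∈ span M (krylovSet φ S m)) :
    ⇑φ ∘ c ∈ span M (krylovSet φ S (m + 1)) := by
  induction hc using Submodule.span_induction with
  | mem v hv =>
    obtain ⟨ℓ, hℓ, s, hs, rfl⟩ := hv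
    exact subset_span ⟨ℓ + 1, by omega, s, hs, by rw [pow_succ']; rfl⟩
  | zero =>
    rw [show ⇑φ ∘ (0 : ι → M) = 0 from funext fun _ => map_zero φ]
    exact zero_mem _
  | add a b _ _ ha hb =>
    rw [show ⇑φ ∘ (a + b) = ⇑φ ∘ a + ⇑φ ∘ b from funext fun _ => map_add φ _ _]
    exact add_mem ha hb
  | smul a v _ hv =>
    rw [show ⇑φ ∘ (a • v) = φ a • (⇑φ ∘ v) from funext fun _ => map_mul φ _ _]
    exact smul_mem _ (φ a) hv

variable [Fintype ι]

theorem finrank_span_krylovSet_lt_succ (hφ : IsOfFinOrder φ)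
    (hS : ∀ h : ι → M, (∀ ℓ : ℕ, ⇑(φ ^ ℓ) ∘ h = h) → (∀ s ∈ S, h ⬝ᵥ s = 0) → h = 0)
    {m : ℕ} (hm : span M (krylovSet φ S m) ≠ ⊤) :
    finrank M (span M (krylovSet φ S m)) < finrank M (span M (krylovSet φ S (m + 1))) := by
  have hle := span_mono (krylovSet_mono φ S m.le_succ) (R := M)
  refine (finrank_mono hle).lt_of_ne fun heq => ?_
  have hstab : ∀ c ∈ span M (krylovSet φ S m), ⇑φ ∘ c ∈ span M (krylovSet φ S m) :=
    fun c hc => eq_of_le_of_finrank_le hle heq.ge ▸ comp_mem_span_krylovSet_succ φ S hc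
  have := hφ.finite_zpowers.to_subtype
  obtain ⟨h, hh0, hfix, hperp⟩ := exists_fixed_ne_zero_forall_dotProduct_eq_zero
    (Subgroup.zpowers φ) (fun g hg c hc => comp_mem_of_mem_zpowers hφ hstab hg hc) hm
  exact hh0 (hS h (fun ℓ => hfix _ (Subgroup.npow_mem_zpowers φ ℓ))
    fun s hs => hperp s (subset_span (subset_krylovSet φ S m hs)))

theorem min_le_finrank_span_krylovSet (hφ : IsOfFinOrder φ)
    (hS : ∀ h : ι → M, (∀ ℓ : ℕ, ⇑(φ ^ ℓ) ∘ h = h) → (∀ s ∈ S, h ⬝ᵥ s = 0) → h = 0)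
    (m : ℕ) :
    min (finrank M (span M S) + m) (Fintype.card ι) ≤ finrank M (span M (krylovSet φ S m)) := by
  induction m with
  | zero => exact (min_le_left _ _).trans (finrank_mono (span_mono (subset_krylovSet φ S 0)))
  | succ m ih =>
    by_cases hm : span M (krylovSet φ S m) = ⊤
    · have htop : span M (krylovSet φ S (m + 1)) = ⊤ :=
        top_le_iff.1 (hm ▸ span_mono (krylovSet_mono φ S m.le_succ))
      rw [htop, finrank_top, finrank_fintype_fun_eq_card]
      exact min_le_right _ _
    · have := finrank_span_krylovSet_lt_succ φ S hφ hS hm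
      omega

end Krylov

theorem exists_lt_gcd_mul_add_mul_modEq {n s₁ : ℕ} (hn : n ≠ 0) (hs₁ : s₁.Coprime n)
    (s₂ e : ℕ) : ∃ j < Nat.gcd s₂ n, ∃ m : ℕ, j * s₁ + m * s₂ ≡ e [MOD n] := by
  have : NeZero n := ⟨hn⟩
  have : NeZero (Nat.gcd s₂ n) := ⟨(Nat.gcd_pos_of_pos_right s₂ (Nat.pos_of_ne_zero hn)).ne'⟩
  let u := ZMod.unitOfCoprime s₁ (hs₁.coprime_dvd_right (Nat.gcd_dvd_right s₂ n))
  set j := ((e : ZMod (Nat.gcd s₂ n)) * ↑u⁻¹).val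
  obtain ⟨c, hc⟩ : ((Nat.gcd s₂ n : ℕ) : ℤ) ∣ e - j * s₁ := by
    rw [← ZMod.intCast_zmod_eq_zero_iff_dvd]
    have : (s₁ : ZMod (Nat.gcd s₂ n)) = u := (ZMod.coe_unitOfCoprime _ _).symm
    push_cast [j, ZMod.natCast_zmod_val, this]
    simp
  refine ⟨j, ZMod.val_lt _, ((Nat.gcdA s₂ n * c : ℤ) : ZMod n).val, ?_⟩
  rw [← ZMod.natCast_eq_natCast_iff]
  have hc' := congrArg (Int.cast : ℤ → ZMod n) hc
  have hb := congrArg (Int.cast : ℤ → ZMod n) (Nat.gcd_eq_gcd_ab s₂ n)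
  push_cast [ZMod.natCast_zmod_val, ZMod.natCast_self] at hc' hb ⊢
  linear_combination -hc' - c * hb

theorem exists_pow_mul_pow_eq_pow {G : Type*} [LeftCancelMonoid G] {x : G} (hx : IsOfFinOrder x)
    {s₁ : ℕ} (hs₁ : s₁.Coprime (orderOf x)) (s₂ e : ℕ) :
    ∃ j < Nat.gcd s₂ (orderOf x), ∃ m : ℕ, (x ^ s₂) ^ m * (x ^ s₁) ^ j = x ^ e := by
  obtain ⟨j, hj, m, hjm⟩ := exists_lt_gcd_mul_add_mul_modEq hx.orderOf_pos.ne' hs₁ s₂ e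
  refine ⟨j, hj, m, ?_⟩
  rw [← pow_mul, ← pow_mul, ← pow_add, pow_eq_pow_iff_modEq]
  rwa [add_comm, mul_comm s₂, mul_comm s₁]

theorem dotProduct_pow_comp_eq_zero {θ : M ≃+* M} (hθ : IsOfFinOrder θ) {s₁ : ℕ}
    (hs₁ : s₁.Coprime (orderOf θ)) {s₂ t : ℕ} (ht : Nat.gcd s₂ (orderOf θ) ≤ t) {ι : Type*}
    [Fintype ι] {h v : ι → M} (hfix : ∀ m : ℕ, ⇑((θ ^ s₂) ^ m) ∘ h = h)
    (hv : ∀ j < t, h ⬝ᵥ (⇑((θ ^ s₁) ^ j) ∘ v) = 0) (e : ℕ) : h ⬝ᵥ (⇑(θ ^ e) ∘ v) = 0 := by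
  obtain ⟨j, hj, m, hjm⟩ := exists_pow_mul_pow_eq_pow hθ hs₁ s₂ e
  rw [← hjm]
  exact dotProduct_comp_eq_zero_of_comp_eq (v := ⇑((θ ^ s₁) ^ j) ∘ v) (hfix m) (hv j (by omega))

theorem range_col_eq_krylovSet_krylovSet (θ : M ≃+* M) {ι : Type*} (v : ι → M)
    {s₁ s₂ t : ℕ} (ht : 1 ≤ t) (i : ℕ) :
    Set.range (Matrix.of fun (row : ι) (col : Fin (i + 1) × Fin t) =>
      (θ ^ ((col.1 : ℕ) * s₂ + (col.2 : ℕ) * s₁)) (v row)).col =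
      krylovSet (θ ^ s₂) (krylovSet (θ ^ s₁) {v} (t - 1)) i := by
  have hcol (ℓ j : ℕ) : (fun row => (θ ^ (ℓ * s₂ + j * s₁)) (v row)) =
      ⇑((θ ^ s₂) ^ ℓ) ∘ ⇑((θ ^ s₁) ^ j) ∘ v := by
    rw [pow_add, pow_mul', pow_mul']
    rfl
  ext w
  constructor
  · rintro ⟨⟨ℓ, j⟩, rfl⟩
    exact ⟨ℓ, by omega, _, ⟨j, by omega, v, rfl, rfl⟩, hcol ℓ j⟩
  · rintro ⟨ℓ, hℓ, _, ⟨j, hj, _, rfl, rfl⟩, rfl⟩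
    exact ⟨(⟨ℓ, by omega⟩, ⟨j, by omega⟩), hcol ℓ j⟩

theorem rank_of_block_circulant_general {M : Type*} [Field M] (θ : M ≃+* M) (n : ℕ)
    (hord : orderOf θ = n) (α : Fin n → M)
    (hli : LinearIndependent (fixedSubfield θ) α)
    (hsp : Submodule.span (fixedSubfield θ) (Set.range α) = ⊤)
    (t r : ℕ) (ht : 1 ≤ t)
    (k : Fin (t + r) → Fin n) (hk : Function.Injective k)
    (s₁ s₂ : ℕ)
    (hgcd₁ : Nat.gcd s₁ n = 1) (hgcd₂ : Nat.gcd s₂ n < t + 1)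
    (i : ℕ) (hi : i ≤ r) :
    t + i ≤ (Matrix.of fun (row : Fin (t + r)) (col : Fin (i + 1) × Fin t) =>
      (θ ^ ((col.1 : ℕ) * s₂ + (col.2 : ℕ) * s₁)) (α (k row))).rank := by
  subst hord
  have hθ : IsOfFinOrder θ := orderOf_pos_iff.1 (k ⟨0, by omega⟩).pos
  have hv₀ : α ∘ k ≠ 0 := fun h => hli.ne_zero _ (congr_fun h ⟨0, by omega⟩)
  have hperp (h : Fin (t + r) → M) (hh : ∀ e : ℕ, h ⬝ᵥ (⇑(θ ^ e) ∘ α ∘ k) = 0) : h = 0 :=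
    eq_zero_of_forall_dotProduct_pow_comp_eq_zero rfl hsp hk hh
  have hA := min_le_finrank_span_krylovSet (θ ^ s₁) {α ∘ k} hθ.pow
    (fun h hfix hh => hperp h <| dotProduct_pow_comp_eq_zero hθ hgcd₁ hgcd₁.le hfix
      fun j hj => by simpa [show j = 0 by omega] using hh _ rfl) (t - 1)
  have hB := min_le_finrank_span_krylovSet (θ ^ s₂) (krylovSet (θ ^ s₁) {α ∘ k} (t - 1)) hθ.pow
    (fun h hfix hh => hperp h <| dotProduct_pow_comp_eq_zero hθ hgcd₁ (t := t) (by omega) hfix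
      fun j hj => hh _ ⟨j, by omega, _, rfl, rfl⟩) i
  have hcols := range_col_eq_krylovSet_krylovSet θ (α ∘ k) (s₁ := s₁) (s₂ := s₂) ht i
  simp only [Function.comp_apply] at hcols
  rw [Matrix.rank_eq_finrank_span_cols, hcols]
  rw [finrank_span_singleton hv₀, Fintype.card_fin] at hA
  rw [Fintype.card_fin] at hB
  omega

/-- **rank lemma.** With `{α₀, …, α_{n-1}}` a `K`-basis of `M` (`K = M^θ`,
`θ` of order `n`), `t ≥ 1`, `r ≥ 0`, `t + r ≤ n`, distinct indices `k₁, …, k_{t+r}`,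
`gcd(s₁, n) = 1` and `gcd(s₂, n) < t + 1`, the block matrix
`B_i = (A | θ^{s₂}(A) | ⋯ | θ^{i s₂}(A))`, where `A` has `(row, j)` entry
`θ^{(j-1)s₁}(α_{k_row})` and `θ` acts entrywise, has rank at least `t + i`, for `0 ≤ i ≤ r`.
(The column indexed by `(ℓ, j)` of `B_i` has entries `θ^{ℓ s₂}(θ^{(j-1)s₁}(α_{k_row}))
= θ^{ℓ s₂ + (j-1) s₁}(α_{k_row})`.) -/
theorem rank_of_block_circulant {M : Type*} [Field M] (θ : M ≃+* M) (n : ℕ)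
    (hord : orderOf θ = n) (α : Fin n → M)
    (hli : LinearIndependent (fixedSubfield θ) α)
    (hsp : Submodule.span (fixedSubfield θ) (Set.range α) = ⊤)
    (t r : ℕ) (ht : 1 ≤ t) (htr : t + r ≤ n)
    (k : Fin (t + r) → Fin n) (hk : Function.Injective k)
    (s₁ s₂ : ℕ) (hs₁ : 0 < s₁) (hs₂ : 0 < s₂)
    (hgcd₁ : Nat.gcd s₁ n = 1) (hgcd₂ : Nat.gcd s₂ n < t + 1)
    (i : ℕ) (hi : i ≤ r) :
    t + i ≤ (Matrix.of fun (row : Fin (t + r)) (col : Fin (i + 1) × Fin t) =>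
      (θ ^ ((col.1 : ℕ) * s₂ + (col.2 : ℕ) * s₁)) (α (k row))).rank :=
  rank_of_block_circulant_general θ n hord α hli hsp t r ht k hk s₁ s₂ hgcd₁ hgcd₂ i hi
end

section
/- Let g ∈ R be a right divisor of x^n − 1 of degree < n, and let C ⊆ L^n be the skew cyclic code it defines. Suppose there exist integers b ≥ 0, δ ≥ 2, r ≥ 0, t_1, t_2 with δ + r − 1 ≤ n, gcd(n, t_1) = 1 and gcd(n, t_2) < δ, such that {b + i·t_1 + ℓ·t_2 mod n : 0 ≤ i ≤ δ−2, 0 ≤ ℓ ≤ r} ⊆ T_β(g). Then the minimum Hamming distance of C is at least δ + r (Hartmann–Tzeng bound for skew cyclic codes). -/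
/-! Skew polynomials over a field `M` twisted by a ring automorphism `θ` (`x·a = θ(a)·x`),
modeled as finitely supported functions `ℕ →₀ M` (coefficient of `xⁱ` at `i`),
with left-coefficient multiplication `(Σᵢ aᵢ xⁱ)·(Σⱼ bⱼ xʲ) = Σᵢⱼ aᵢ θⁱ(bⱼ) x^{i+j}`. -/

variable {M : Type*} [Field M]

/-! Right evaluation at `γ` kills every left multiple of `x - γ`. For `γ = θᵏ(β)` with `β = α⁻¹θ(α)` the norms `Nⱼ(γ)` telescope to
`θᵏ(α)⁻¹θᵏ(θʲα)`, so each `k` in the defining set gives `∑ⱼ cⱼ θᵏ(θʲα) = 0`: the vectors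
`ρₖ = (θᵏ(θʲα))_{j ∈ supp c}` lie in the hyperplane `c^⊥` of `M^{supp c}`, while by Artin's lemma
not all of them do. Applying `θᵗ` coordinatewise maps `ρₖ` to `ρₖ₊ₜ`, so spans of shifted index
sets either grow strictly or become `θᵗ`-stable; since `t₁` is a unit mod `n` and the multiples of
`t₂` fill the residues modulo `gcd(n, t₂) < δ`, stability would put every `ρₖ` into `c^⊥`. Hence
the spans along `b + ℓt₂` (`ℓ ≤ r`) and then `b + it₁ + ℓt₂` (`i ≤ δ - 2`) grow `δ + r - 1`
times inside `c^⊥`, whose dimension is `wt(c) - 1`. -/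

theorem RingAut.pow_apply_pow_apply (θ : M ≃+* M) (i j : ℕ) (x : M) :
    (θ ^ i) ((θ ^ j) x) = (θ ^ (i + j)) x := by
  rw [pow_add, RingAut.mul_apply]

theorem LinearIndependent.eq_zero_of_forall_sum_mul_pow_apply_eq_zero {θ : M ≃+* M}
    (hθ : IsOfFinOrder θ) {ι : Type*} [Fintype ι] {v : ι → M}
    (hv : LinearIndependent (fixedSubfield θ) v) {m : ι → M}
    (h : ∀ k : ℕ, ∑ i, m i * (θ ^ k) (v i) = 0) : m = 0 := by
  classical
  set G := Subgroup.zpowers θ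
  have hfix : FixedPoints.subfield G M = fixedSubfield θ := by
    ext x
    refine ⟨fun hx => hx ⟨θ, Subgroup.mem_zpowers θ⟩, fun hx ⟨g, hg⟩ => ?_⟩
    obtain ⟨z, rfl⟩ := Subgroup.mem_zpowers_iff.mp hg
    exact MulAction.fixedBy_subset_fixedBy_zpow M θ z hx
  have hind := FixedPoints.linearIndependent_smul_of_linearIndependent G M
    (s := Finset.univ.image v) (by
      rwa [Finset.coe_image, Finset.coe_univ, Set.image_univ,
        linearIndepOn_id_range_iff hv.injective, hfix])
  rw [Finset.coe_image, Finset.coe_univ, Set.image_univ,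
    linearIndepOn_range_iff hv.injective] at hind
  refine funext (Fintype.linearIndependent_iff.mp hind m (funext fun ⟨g, hg⟩ => ?_))
  obtain ⟨k, rfl⟩ := hθ.mem_powers_iff_mem_zpowers.mpr hg
  rw [Finset.sum_apply]
  exact h k

namespace ZMod

theorem exists_natCast_mul_eq_of_gcd_dvd {n t : ℕ} [NeZero n] {d : ℤ}
    (hd : (Nat.gcd n t : ℤ) ∣ d) : ∃ m : ℕ, (m * t : ZMod n) = d := by
  obtain ⟨c, rfl⟩ := hd
  refine ⟨((Nat.gcdB n t * c : ℤ) : ZMod n).val, ?_⟩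
  rw [natCast_zmod_val, Nat.gcd_eq_gcd_ab]
  push_cast
  rw [natCast_self]
  ring

theorem exists_add_mul_eq {n t : ℕ} [NeZero n] (ht : Nat.Coprime t n) (b k : ℕ) :
    ∃ m < n, ((b + m * t : ℕ) : ZMod n) = k := by
  refine ⟨((k - b) * (t : ZMod n)⁻¹ : ZMod n).val, val_lt _, ?_⟩
  push_cast
  rw [natCast_zmod_val, mul_assoc, mul_comm _ (t : ZMod n), coe_mul_inv_eq_one t ht]
  ring

theorem exists_add_mul_add_mul_eq {n t₁ t₂ : ℕ} [NeZero n] (ht₁ : Nat.Coprime n t₁)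
    (b k : ℕ) : ∃ i < Nat.gcd n t₂, ∃ m : ℕ, ((b + i * t₁ + m * t₂ : ℕ) : ZMod n) = k := by
  have he : Nat.Coprime t₁ (Nat.gcd n t₂) := (ht₁.coprime_dvd_left (Nat.gcd_dvd_left n t₂)).symm
  have : NeZero (Nat.gcd n t₂) := ⟨(Nat.gcd_pos_of_pos_left t₂ (NeZero.pos n)).ne'⟩
  obtain ⟨i, hi, hik⟩ := exists_add_mul_eq he b k
  have hdvd : (Nat.gcd n t₂ : ℤ) ∣ (k : ℤ) - (b + i * t₁ : ℕ) := by
    rw [← intCast_zmod_eq_zero_iff_dvd]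
    push_cast at hik ⊢
    rw [hik, sub_self]
  obtain ⟨m, hm⟩ := exists_natCast_mul_eq_of_gcd_dvd (n := n) hdvd
  refine ⟨i, hi, m, ?_⟩
  push_cast at hm ⊢
  rw [hm]
  ring

end ZMod

def arithGrid (b t₁ t₂ p r : ℕ) : Set ℕ := {k | ∃ i < p, ∃ l ≤ r, k = b + i * t₁ + l * t₂}

section ArithGrid

variable {b t₁ t₂ p r : ℕ}

theorem arithGrid_mono {p' : ℕ} (h : p ≤ p') : arithGrid b t₁ t₂ p r ⊆ arithGrid b t₁ t₂ p' r :=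
  fun _ ⟨i, hi, l, hl, hk⟩ => ⟨i, hi.trans_le h, l, hl, hk⟩

theorem add_mem_arithGrid_succ {a : ℕ} (ha : a ∈ arithGrid b t₁ t₂ p r) :
    a + t₁ ∈ arithGrid b t₁ t₂ (p + 1) r := by
  obtain ⟨i, hi, l, hl, rfl⟩ := ha
  exact ⟨i + 1, by omega, l, hl, by ring⟩

@[simp]
theorem arithGrid_zero : arithGrid b t₁ t₂ 0 r = ∅ :=
  Set.eq_empty_of_forall_notMem fun _ ⟨_, hi, _⟩ => Nat.not_lt_zero _ hi

theorem self_mem_arithGrid (hp : 0 < p) : b ∈ arithGrid b t₁ t₂ p r :=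
  ⟨0, hp, 0, r.zero_le, by ring⟩

end ArithGrid

section ShiftedFamily

open Submodule Module

variable {F V : Type*} [Field F] [AddCommGroup V] [Module F V] {τ : F →+* F}
  (Φ : V →ₛₗ[τ] V) {ρ : ℕ → V} {t : ℕ}

theorem span_image_le_comap_span_image (hΦ : ∀ k, Φ (ρ k) = ρ (k + t)) {A A' : Set ℕ}
    (hAA' : ∀ a ∈ A, a + t ∈ A') : span F (ρ '' A) ≤ (span F (ρ '' A')).comap Φ :=
  span_le.mpr <| by
    rintro _ ⟨a, ha, rfl⟩
    exact subset_span ⟨a + t, hAA' a ha, (hΦ a).symm⟩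

theorem add_mul_mem_span_image_of_span_image_le (hΦ : ∀ k, Φ (ρ k) = ρ (k + t))
    {A A' : Set ℕ} (hAA' : ∀ a ∈ A, a + t ∈ A') (hle : span F (ρ '' A') ≤ span F (ρ '' A))
    {a : ℕ} (ha : a ∈ A') (m : ℕ) : ρ (a + m * t) ∈ span F (ρ '' A) := by
  induction m with
  | zero => simpa using hle (subset_span ⟨a, ha, rfl⟩)
  | succ m ih =>
    rw [add_one_mul, ← add_assoc, ← hΦ]
    exact hle (span_image_le_comap_span_image Φ hΦ hAA' ih)

theorem add_le_finrank_span_image [FiniteDimensional F V] (hΦ : ∀ k, Φ (ρ k) = ρ (k + t))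
    (A : ℕ → Set ℕ) (hmono : ∀ j, A j ⊆ A (j + 1)) (hshift : ∀ j, ∀ a ∈ A j, a + t ∈ A (j + 1))
    (N : ℕ) (hgrow : ∀ j < N, ∃ a ∈ A (j + 1), ∃ m, ρ (a + m * t) ∉ span F (ρ '' A j)) :
    finrank F (span F (ρ '' A 0)) + N ≤ finrank F (span F (ρ '' A N)) := by
  induction N with
  | zero => rfl
  | succ N ih =>
    have hlt : span F (ρ '' A N) < span F (ρ '' A (N + 1)) := by
      refine lt_of_le_not_ge (span_mono (Set.image_mono (hmono N))) fun hle => ?_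
      obtain ⟨a, ha, m, hm⟩ := hgrow N N.lt_succ_self
      exact hm (add_mul_mem_span_image_of_span_image_le Φ hΦ (hshift N) hle ha m)
    have := finrank_lt_finrank_of_lt hlt
    have := ih fun j hj => hgrow j (by omega)
    omega

end ShiftedFamily

section HartmannTzeng

open Submodule Module

variable {F V : Type*} [Field F] [AddCommGroup V] [Module F V] {τ₁ τ₂ : F →+* F}
  {ρ : ℕ → V} {n t₁ t₂ b δ r : ℕ}

theorem exists_add_mul_notMem_span_arithGrid [NeZero n] (Φ₁ : V →ₛₗ[τ₁] V)
    (hΦ₁ : ∀ k, Φ₁ (ρ k) = ρ (k + t₁)) (hper : ∀ k k' : ℕ, (k : ZMod n) = k' → ρ k = ρ k')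
    (ht₁ : Nat.Coprime n t₁) (ht₂ : Nat.gcd n t₂ < δ) {W : Submodule F V}
    (hW : span F (ρ '' arithGrid b t₁ t₂ (δ - 1) r) ≤ W) {k₀ : ℕ} (hk₀ : ρ k₀ ∉ W) :
    ∃ m, ρ (b + m * t₂) ∉ span F (ρ '' arithGrid b t₁ t₂ 1 r) := by
  by_contra! h
  have hgrid : ∀ i m, ρ (b + i * t₁ + m * t₂) ∈ span F (ρ '' arithGrid b t₁ t₂ (i + 1) r) := by
    intro i
    induction i with
    | zero => simpa using h
    | succ i ih =>
      intro m
      have := span_image_le_comap_span_image Φ₁ hΦ₁ (fun _ => add_mem_arithGrid_succ) (ih m)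
      rw [mem_comap, hΦ₁] at this
      rwa [add_one_mul, ← add_assoc, add_right_comm _ t₁]
  obtain ⟨i, hi, m, hm⟩ := ZMod.exists_add_mul_add_mul_eq (t₂ := t₂) ht₁ b k₀
  rw [← hper _ _ hm] at hk₀
  exact hk₀ (hW (span_mono (Set.image_mono (arithGrid_mono (by omega))) (hgrid i m)))

theorem Module.Dual.add_le_finrank_of_apply_arithGrid_eq_zero [FiniteDimensional F V] [NeZero n]
    (Φ₁ : V →ₛₗ[τ₁] V) (Φ₂ : V →ₛₗ[τ₂] V) (hΦ₁ : ∀ k, Φ₁ (ρ k) = ρ (k + t₁))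
    (hΦ₂ : ∀ k, Φ₂ (ρ k) = ρ (k + t₂)) (hper : ∀ k k' : ℕ, (k : ZMod n) = k' → ρ k = ρ k')
    (ht₁ : Nat.Coprime n t₁) (ht₂ : Nat.gcd n t₂ < δ) (f : Dual F V)
    (hf : ∀ i ≤ δ - 2, ∀ l ≤ r, f (ρ (b + i * t₁ + l * t₂)) = 0) (hρ : ∃ k, f (ρ k) ≠ 0) :
    δ + r ≤ finrank F V := by
  obtain ⟨k₀, hk₀⟩ := hρ
  have hker : span F (ρ '' arithGrid b t₁ t₂ (δ - 1) r) ≤ LinearMap.ker f := span_le.mpr <| by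
    rintro _ ⟨_, ⟨i, hi, l, hl, rfl⟩, rfl⟩
    exact hf i (by omega) l hl
  -- `arithGrid b t₂ 0 l 0 = {b + i t₂ : i < l}`
  have hJI : arithGrid b t₂ 0 (r + 1) 0 ⊆ arithGrid b t₁ t₂ 1 r :=
    fun _ ⟨i, hi, l, hl, hk⟩ => ⟨0, one_pos, i, by omega, by simp [hk]⟩
  have hJ := add_le_finrank_span_image Φ₂ hΦ₂ (fun l => arithGrid b t₂ 0 l 0)
    (fun l => arithGrid_mono l.le_succ) (fun _ _ => add_mem_arithGrid_succ) (r + 1) fun j hj => by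
      obtain ⟨m, hm⟩ := exists_add_mul_notMem_span_arithGrid Φ₁ hΦ₁ hper ht₁ ht₂ hker hk₀
      refine ⟨b, self_mem_arithGrid j.succ_pos, m, fun hmem => hm (span_mono ?_ hmem)⟩
      exact Set.image_mono ((arithGrid_mono hj.le).trans hJI)
  have hI : finrank F (span F (ρ '' arithGrid b t₁ t₂ 1 r)) + (δ - 2) ≤
      finrank F (span F (ρ '' arithGrid b t₁ t₂ (δ - 2 + 1) r)) :=
    add_le_finrank_span_image Φ₁ hΦ₁ (fun j => arithGrid b t₁ t₂ (j + 1) r)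
      (fun j => arithGrid_mono j.succ.le_succ) (fun _ _ => add_mem_arithGrid_succ) (δ - 2)
      fun j hj => by
        obtain ⟨m, -, hm⟩ := ZMod.exists_add_mul_eq ht₁.symm b k₀
        refine ⟨b, self_mem_arithGrid (by omega), m, fun hmem => hk₀ ?_⟩
        rw [← hper _ _ hm, ← LinearMap.mem_ker]
        exact hker (span_mono (Set.image_mono (arithGrid_mono (by omega))) hmem)
  have hf0 : f ≠ 0 := fun h => hk₀ (by rw [h, LinearMap.zero_apply])
  have hδ : 1 < δ := Nat.lt_of_le_of_lt (Nat.gcd_pos_of_pos_left t₂ (NeZero.pos n)) ht₂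
  rw [show δ - 2 + 1 = δ - 1 by omega] at hI
  rw [finrank_eq_zero.mpr (by simp), zero_add] at hJ
  calc δ + r = r + 1 + (δ - 2) + 1 := by omega
    _ ≤ finrank F (span F (ρ '' arithGrid b t₁ t₂ 1 r)) + (δ - 2) + 1 := by
      gcongr
      exact hJ.trans (finrank_mono (span_mono (Set.image_mono hJI)))
    _ ≤ finrank F (LinearMap.ker f) + 1 := by
      gcongr
      exact hI.trans (finrank_mono hker)
    _ = finrank F V := f.finrank_ker_add_one_of_ne_zero hf0

end HartmannTzeng

section SkewEvaluation

variable (θ : M ≃+* M) (γ : M)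

/-- `Nⱼ(γ) = γ θ(γ) ⋯ θ^{j-1}(γ)`, the value of `xʲ` under right evaluation at `γ`. -/
noncomputable def skewNorm (j : ℕ) : M := ∏ m ∈ Finset.range j, (θ ^ m) γ

/-- The remainder of right division by `x - γ` in `M[x;θ]`. -/
noncomputable def rightEval : (ℕ →₀ M) →+ M :=
  Finsupp.liftAddHom fun j => AddMonoidHom.mulRight (skewNorm θ γ j)

variable {θ γ}

theorem rightEval_single (j : ℕ) (a : M) :
    rightEval θ γ (Finsupp.single j a) = a * skewNorm θ γ j :=
  Finsupp.liftAddHom_apply_single _ _ _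

theorem rightEval_apply (f : ℕ →₀ M) : rightEval θ γ f = f.sum fun j a => a * skewNorm θ γ j :=
  rfl

theorem skewNorm_add (i j : ℕ) :
    skewNorm θ γ (i + j) = skewNorm θ γ i * (θ ^ i) (skewNorm θ γ j) := by
  simp only [skewNorm, Finset.prod_range_add, map_prod, RingAut.pow_apply_pow_apply]

theorem rightEval_Xsub : rightEval θ γ (Xsub γ) = 0 := by
  simp [Xsub, rightEval_single, skewNorm]

theorem rightEval_sMul (q g : ℕ →₀ M) :
    rightEval θ γ (sMul θ q g) =
      q.sum fun i a => a * skewNorm θ γ i * (θ ^ i) (rightEval θ γ g) := by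
  simp only [sMul, map_finsuppSum, rightEval_single, rightEval_apply g, Finsupp.mul_sum,
    skewNorm_add, map_mul]
  exact Finsupp.sum_congr fun i _ => Finsupp.sum_congr fun j _ => by ring

theorem rightEval_eq_zero_of_rdvd {g f : ℕ →₀ M} (hg : rightEval θ γ g = 0)
    (hgf : rdvd θ g f) : rightEval θ γ f = 0 := by
  obtain ⟨q, rfl⟩ := hgf
  simp [rightEval_sMul, hg]

theorem rightEval_vecPoly {n : ℕ} (c : Fin n → M) :
    rightEval θ γ (vecPoly c) = ∑ j, c j * skewNorm θ γ j := by
  simp [vecPoly, rightEval_single]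

theorem skewNorm_map (K j : ℕ) : skewNorm θ ((θ ^ K) γ) j = (θ ^ K) (skewNorm θ γ j) := by
  simp only [skewNorm, map_prod, RingAut.pow_apply_pow_apply, add_comm]

theorem skewNorm_inv_mul_apply {α : M} (hα : α ≠ 0) (j : ℕ) :
    skewNorm θ (α⁻¹ * θ α) j = α⁻¹ * (θ ^ j) α := by
  induction j with
  | zero => simp [skewNorm, hα]
  | succ j ih =>
    have : (θ ^ j) α ≠ 0 := (map_ne_zero _).mpr hα
    rw [skewNorm, Finset.prod_range_succ, ← skewNorm, ih, map_mul, map_inv₀, pow_succ,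
      RingAut.mul_apply]
    field_simp

end SkewEvaluation

theorem sum_mul_pow_apply_eq_zero_of_rdvd {θ : M ≃+* M} {α : M} (hα : α ≠ 0) {K n : ℕ}
    {g : ℕ →₀ M} {c : Fin n → M} (hX : rdvd θ (Xsub ((θ ^ K) (α⁻¹ * θ α))) g)
    (hg : rdvd θ g (vecPoly c)) : ∑ j, c j * (θ ^ K) ((θ ^ (j : ℕ)) α) = 0 := by
  have h := rightEval_eq_zero_of_rdvd (rightEval_eq_zero_of_rdvd rightEval_Xsub hX) hg
  simp only [rightEval_vecPoly, skewNorm_map, skewNorm_inv_mul_apply hα] at h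
  simp only [map_mul, map_inv₀, mul_left_comm (c _), ← Finset.mul_sum] at h
  exact (mul_eq_zero.mp h).resolve_left (inv_ne_zero ((map_ne_zero _).mpr hα))

def RingHom.compLeftSemilinearMap {R : Type*} [Semiring R] (τ : R →+* R) (ι : Type*) :
    (ι → R) →ₛₗ[τ] (ι → R) where
  toFun v j := τ (v j)
  map_add' _ _ := funext fun _ => map_add τ _ _
  map_smul' _ _ := funext fun _ => map_mul τ _ _

theorem hWt_eq_finrank {n : ℕ} (c : Fin n → M) :
    hWt c = Module.finrank M ({j | c j ≠ 0} → M) := by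
  classical
  rw [Module.finrank_fintype_fun_eq_card, ← Nat.card_eq_fintype_card, Nat.card_coe_set_eq]
  rfl

theorem add_le_hWt_of_sum_mul_pow_apply_eq_zero {θ : M ≃+* M} {n : ℕ} (hθ : θ ^ n = 1)
    {v : Fin n → M} (hv : LinearIndependent (fixedSubfield θ) v) {c : Fin n → M} (hc : c ≠ 0)
    {b δ r t₁ t₂ : ℕ} (ht₁ : Nat.gcd n t₁ = 1) (ht₂ : Nat.gcd n t₂ < δ)
    (h : ∀ i ≤ δ - 2, ∀ l ≤ r, ∑ j, c j * (θ ^ (b + i * t₁ + l * t₂)) (v j) = 0) :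
    δ + r ≤ hWt c := by
  classical
  have : NeZero n := ⟨by rintro rfl; exact hc (Subsingleton.elim _ _)⟩
  let P := {j | c j ≠ 0}
  let ρ : ℕ → P → M := fun k j => (θ ^ k) (v j)
  let f : Module.Dual M (P → M) := ∑ j : P, c j • LinearMap.proj j
  have hf : ∀ k, f (ρ k) = ∑ j, c j * (θ ^ k) (v j) := fun k => by
    simp only [f, ρ, LinearMap.sum_apply, LinearMap.smul_apply, LinearMap.proj_apply, smul_eq_mul]
    rw [Finset.sum_set_coe (f := fun j => c j * (θ ^ k) (v j)), Set.toFinset_ofPred,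
      Finset.sum_filter_of_ne fun j _ hj => left_ne_zero_of_mul hj]
  have hshift : ∀ t k,
      ((θ ^ t : M ≃+* M) : M →+* M).compLeftSemilinearMap P (ρ k) = ρ (k + t) :=
    fun t k => funext fun j => by
      show (θ ^ t) ((θ ^ k) (v j)) = (θ ^ (k + t)) (v j)
      rw [RingAut.pow_apply_pow_apply, add_comm]
  have hper : ∀ k k' : ℕ, (k : ZMod n) = k' → ρ k = ρ k' := fun k k' hk => by
    simp only [ρ, pow_eq_pow_mod k hθ, pow_eq_pow_mod k' hθ,
      (ZMod.natCast_eq_natCast_iff' _ _ _).mp hk]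
  rw [hWt_eq_finrank]
  refine Module.Dual.add_le_finrank_of_apply_arithGrid_eq_zero _ _ (hshift t₁) (hshift t₂) hper
    ht₁ ht₂ f (fun i hi l hl => (hf _).trans (h i hi l hl)) ?_
  by_contra! hρ
  refine hc (hv.eq_zero_of_forall_sum_mul_pow_apply_eq_zero ?_ fun k => (hf k).symm.trans (hρ k))
  exact isOfFinOrder_iff_pow_eq_one.mpr ⟨n, NeZero.pos n, hθ⟩

theorem hartmann_tzeng_bound_skew_general {M : Type*} [Field M] (θ : M ≃+* M) (n : ℕ)
    (hord : orderOf θ = n)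
    (α : M) (hα : NormalBasis θ n α) (β : M) (hβ : β = α⁻¹ * θ α)
    (g : ℕ →₀ M)
    (b δ r t₁ t₂ : ℕ)
    (ht₁ : Nat.gcd n t₁ = 1) (ht₂ : Nat.gcd n t₂ < δ)
    (hT : ∀ i ≤ δ - 2, ∀ l ≤ r,
      rdvd θ (Xsub ((θ ^ ((b + i * t₁ + l * t₂) % n)) β)) g)
    (c : Fin n → M)
    (hcC : rdvd θ g (vecPoly c)) (hc0 : c ≠ 0) :
    δ + r ≤ hWt c := by
  subst hβ
  have hθ : θ ^ n = 1 := hord ▸ pow_orderOf_eq_one θ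
  obtain ⟨j, -⟩ := Function.ne_iff.mp hc0
  have hα0 : α ≠ 0 := (map_ne_zero _).mp (hα.1.ne_zero j)
  refine add_le_hWt_of_sum_mul_pow_apply_eq_zero (b := b) (r := r) hθ hα.1 hc0 ht₁ ht₂
    fun i hi l hl => ?_
  rw [pow_eq_pow_mod (b + i * t₁ + l * t₂) hθ]
  exact sum_mul_pow_apply_eq_zero_of_rdvd hα0 (hT i hi l hl) hcC

/-- **Hartmann–Tzeng bound for skew cyclic codes.**
Setting: `θ` an automorphism of `M` of order `n = μ·s`, `L = M^{θ^μ}`, `σ = θ|_L`,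
`R = L[x;σ] ⊆ S = M[x;θ]`, `α` generating a normal basis of `M/K` (`K = M^θ`) and
`β = α⁻¹θ(α)`. Let `g ∈ R` be a right divisor of `xⁿ - 1` of degree `< n` and `C ⊆ Lⁿ` the
skew cyclic code it defines. If there are integers `b ≥ 0`, `δ ≥ 2`, `r ≥ 0`, `t₁, t₂` with
`δ + r - 1 ≤ n`, `gcd(n, t₁) = 1`, `gcd(n, t₂) < δ` and
`{b + i·t₁ + ℓ·t₂ mod n : 0 ≤ i ≤ δ-2, 0 ≤ ℓ ≤ r} ⊆ T_β(g)`, then every nonzero codeword of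
`C` has Hamming weight at least `δ + r`. -/
theorem hartmann_tzeng_bound_skew {M : Type*} [Field M] (θ : M ≃+* M) (μ s n : ℕ)
    (hμ : 0 < μ) (hs : 0 < s) (hn : n = μ * s) (hord : orderOf θ = n)
    (α : M) (hα : NormalBasis θ n α) (β : M) (hβ : β = α⁻¹ * θ α)
    (g : ℕ →₀ M) (hgR : inR (θ ^ μ) g)
    (hgdvd : rdvd θ g (XnSubOne n)) (hgdeg : ∀ j, n ≤ j → g j = 0)
    (b δ r t₁ t₂ : ℕ) (hδ : 2 ≤ δ) (hδr : δ + r ≤ n + 1)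
    (ht₁ : Nat.gcd n t₁ = 1) (ht₂ : Nat.gcd n t₂ < δ)
    (hT : ∀ i ≤ δ - 2, ∀ l ≤ r,
      rdvd θ (Xsub ((θ ^ ((b + i * t₁ + l * t₂) % n)) β)) g)
    (c : Fin n → M) (hcL : ∀ j, (θ ^ μ) (c j) = c j)
    (hcC : rdvd θ g (vecPoly c)) (hc0 : c ≠ 0) :
    δ + r ≤ hWt c :=
  hartmann_tzeng_bound_skew_general θ n hord α hα β hβ g b δ r t₁ t₂ ht₁ ht₂ hT c hcC hc0
end

section
/- Let b, δ, r, t_1, t_2 be integers with b ≥ 0, δ ≥ 2, r ≥ 0, δ + r − 1 ≤ n, gcd(n, t_1) = 1 and gcd(n, t_2) < δ. If c = (c_0, …, c_{n−1}) ∈ M^n is nonzero and satisfies Σ_{j=0}^{n−1} c_j · θ^{b + i·t_1 + ℓ·t_2 + j}(α) = 0 for all 0 ≤ i ≤ δ−2 and all 0 ≤ ℓ ≤ r, then the Hamming weight of c is at least δ + r. -/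
/-! Skew polynomials over a field `M` twisted by a ring automorphism `θ` (`x·a = θ(a)·x`),
modeled as finitely supported functions `ℕ →₀ M` (coefficient of `xⁱ` at `i`),
with left-coefficient multiplication `(Σᵢ aᵢ xⁱ)·(Σⱼ bⱼ xʲ) = Σᵢⱼ aᵢ θⁱ(bⱼ) x^{i+j}`. -/

variable {M : Type*} [Field M]

/-!
Restrict `c` to its support `J` and let `W_l ⊆ M^J` be the span of the columns
`(θ^u(θ^j α))_{j ∈ J}` for `u = b + i t₁ + l' t₂`, `i ≤ δ - 2`, `l' ≤ l`. The parity checks say that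
`W_r` lies in the kernel of `x ↦ Σ c_j x_j`, so `dim W_r < |J|`. A Moore-matrix argument (the
vectors `(φ^i(γ_k))_k, i < |J|`, span `M^J` whenever the `γ_k` are independent over the fixed field
of `φ`) applied to `φ = θ^{t₁}` gives `dim W_0 ≥ min(δ - 1, |J|)`. If the chain `W_0 ≤ ⋯ ≤ W_r`
stalls at some step, `W_l` is stable under `θ^{t₂}`; since every exponent is `b + i t₁ + l' t₂`
modulo `n` with `i < gcd(n, t₂) < δ`, `W_l` then contains all the columns and is everything by the
same Moore argument for `φ = θ`. So the chain grows strictly and `min(δ - 1, |J|) + r < |J|`.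
-/

open Finset Submodule Module

section

variable {ι : Type*}

noncomputable def powVec (φ : M ≃+* M) (γ : ι → M) (u : ℕ) : ι → M := fun k => (φ ^ u) (γ k)

section Moore

variable {K : Subfield M} {φ : M ≃+* M}

theorem eq_zero_of_sum_mul_pow_apply_eq_zero (hφ : ∀ x, φ x = x → x ∈ K) {γ : ι → M}
    (hγ : LinearIndependent K γ) (s : Finset ι) {d : ι → M}
    (hd : ∀ i < #s, ∑ k ∈ s, d k * (φ ^ i) (γ k) = 0) : ∀ k ∈ s, d k = 0 := by
  classical
  induction s using Finset.strongInduction generalizing d with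
  | _ s ih =>
  by_contra! ⟨k₀, hk₀s, hk₀⟩
  set d' : ι → M := fun k => d k / d k₀
  have hd'k₀ : d' k₀ = 1 := div_self hk₀
  have hd' : ∀ i < #s, ∑ k ∈ s, d' k * (φ ^ i) (γ k) = 0 := fun i hi => by
    simp only [d', div_mul_eq_mul_div, ← Finset.sum_div, hd i hi, zero_div]
  -- `d' - φ⁻¹ ∘ d'` vanishes at `k₀` and still satisfies all but the last relation
  have he : ∀ i < #(s.erase k₀),
      ∑ k ∈ s.erase k₀, (d' k - φ.symm (d' k)) * (φ ^ i) (γ k) = 0 := by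
    intro i hi
    rw [card_erase_of_mem hk₀s] at hi
    have hshift : ∑ k ∈ s, φ.symm (d' k) * (φ ^ i) (γ k) = 0 := by
      have := congrArg φ.symm (hd' (i + 1) (by omega))
      rw [map_sum, map_zero] at this
      simpa [pow_succ'] using this
    rw [sum_erase _ (by simp [hd'k₀])]
    simp only [sub_mul, sum_sub_distrib, hd' i (by omega), hshift, sub_zero]
  have hfix : ∀ k ∈ s, φ (d' k) = d' k := by
    intro k hk
    have : d' k - φ.symm (d' k) = 0 := by
      rcases eq_or_ne k k₀ with rfl | hne
      · simp [hd'k₀]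
      · exact ih _ (erase_ssubset hk₀s) he k (mem_erase.2 ⟨hne, hk⟩)
    rw [sub_eq_zero] at this
    nth_rw 1 [this]
    exact φ.apply_symm_apply _
  have hK := Fintype.linearIndependent_iff.1 (hγ.comp ((↑) : s → ι) Subtype.val_injective)
    (fun k => ⟨d' k, hφ _ (hfix k k.2)⟩)
    (by
      change ∑ k : s, d' k * γ k = 0
      simpa using (sum_coe_sort s fun k => d' k * (φ ^ 0) (γ k)).trans
        (hd' 0 (card_pos.2 ⟨k₀, hk₀s⟩)))
    ⟨k₀, hk₀s⟩
  simp [Subtype.ext_iff, hd'k₀] at hK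

theorem span_powVec_eq_top [Fintype ι] (hφ : ∀ x, φ x = x → x ∈ K) {γ : ι → M}
    (hγ : LinearIndependent K γ) : span M (powVec φ γ '' Set.Iio (Fintype.card ι)) = ⊤ := by
  classical
  by_contra hne
  obtain ⟨f, hf0, hf⟩ := exists_dual_map_eq_bot_of_lt_top (lt_top_iff_ne_top.2 hne) inferInstance
  have hd : ∀ k, f (fun j => if k = j then 1 else 0) = 0 := fun k =>
    eq_zero_of_sum_mul_pow_apply_eq_zero hφ hγ univ
      (d := fun k => f fun j => if k = j then 1 else 0) (fun i hi => by
        have : f (powVec φ γ i) = 0 :=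
          (mem_bot M).1 (hf ▸ mem_map_of_mem (subset_span ⟨i, by simpa using hi, rfl⟩))
        rw [LinearMap.pi_apply_eq_sum_univ] at this
        simpa only [powVec, smul_eq_mul, mul_comm] using this) k (mem_univ k)
  exact hf0 (LinearMap.ext fun x => by rw [LinearMap.pi_apply_eq_sum_univ]; simp [hd])

end Moore

theorem LinearIndependent.pow_apply {θ : M ≃+* M} {γ : ι → M}
    (hγ : LinearIndependent (fixedSubfield θ) γ) (b : ℕ) :
    LinearIndependent (fixedSubfield θ) fun k => (θ ^ b) (γ k) :=
  hγ.map' (AlgEquiv.ofRingEquiv (f := θ ^ b) fun x =>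
    (RingAut.coe_pow θ b).symm ▸ Function.IsFixedPt.iterate x.2 b).toLinearMap
    (LinearEquiv.ker _)

theorem mem_fixedSubfield_of_pow_apply_eq {θ : M ≃+* M} {t : ℕ} (ht : t.Coprime (orderOf θ))
    {x : M} (hx : (θ ^ t) x = x) : x ∈ fixedSubfield θ := by
  obtain ⟨m, hm⟩ := exists_pow_eq_self_of_coprime ht
  change θ x = x
  rw [← hm, RingAut.coe_pow]
  exact Function.IsFixedPt.iterate hx m

theorem Nat.exists_add_mul_add_mul_modEq {n t₁ t₂ : ℕ} (hn : 0 < n) (ht₁ : n.gcd t₁ = 1)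
    (b u : ℕ) : ∃ i < n.gcd t₂, ∃ l, b + i * t₁ + l * t₂ ≡ u [MOD n] := by
  have hg : (0 : ℤ) < n.gcd t₂ := by exact_mod_cast Nat.gcd_pos_of_pos_left t₂ hn
  have hbez₁ : (1 : ℤ) = n.gcd t₂ * (n.gcd t₂).gcdA t₁ + t₁ * (n.gcd t₂).gcdB t₁ := by
    rw [← Nat.gcd_eq_gcd_ab, Nat.Coprime.coprime_dvd_left (Nat.gcd_dvd_left n t₂) ht₁,
      Nat.cast_one]
  have hbez₂ := Nat.gcd_eq_gcd_ab n t₂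
  -- solve `u - b ≡ i t₁ (mod gcd n t₂)` with `0 ≤ i < gcd n t₂`, then use `gcd n t₂ ∈ t₂ℤ + nℤ`
  set i : ℤ := (u - b) * (n.gcd t₂).gcdB t₁ % n.gcd t₂
  set m : ℤ := (u - b) * (n.gcd t₂).gcdA t₁ + t₁ * ((u - b) * (n.gcd t₂).gcdB t₁ / n.gcd t₂)
  have hm : (u - b : ℤ) = t₁ * i + n.gcd t₂ * m := by
    linear_combination (u - b : ℤ) * hbez₁ -
      t₁ * Int.emod_add_mul_ediv ((u - b) * (n.gcd t₂).gcdB t₁) (n.gcd t₂)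
  set l : ℤ := n.gcdB t₂ * m % n
  have hl : n.gcdB t₂ * m = l + n * (n.gcdB t₂ * m / n) := (Int.emod_add_mul_ediv _ _).symm
  have hi : (i.toNat : ℤ) = i := Int.toNat_of_nonneg (Int.emod_nonneg _ hg.ne')
  have hl' : (l.toNat : ℤ) = l := Int.toNat_of_nonneg (Int.emod_nonneg _ (by omega))
  refine ⟨i.toNat, by have := Int.emod_lt_of_pos ((u - b) * (n.gcd t₂).gcdB t₁) hg; omega,
    l.toNat, Nat.modEq_iff_dvd.2 ⟨n.gcdA t₂ * m + t₂ * (n.gcdB t₂ * m / n), ?_⟩⟩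
  push_cast [hi, hl']
  linear_combination hm + m * hbez₂ + t₂ * hl

theorem Submodule.finrank_add_le_finrank_of_forall_lt {K V : Type*} [DivisionRing K]
    [AddCommGroup V] [Module K V] [FiniteDimensional K V] {W : ℕ → Submodule K V} :
    ∀ r, (∀ l < r, W l < W (l + 1)) → finrank K (W 0) + r ≤ finrank K (W r)
  | 0, _ => le_rfl
  | r + 1, h => by
    have := Submodule.finrank_lt_finrank_of_lt (h r r.lt_succ_self)
    have := finrank_add_le_finrank_of_forall_lt r fun l hl => h l (by omega)
    omega

def parityCheckSpan (θ : M ≃+* M) (γ : ι → M) (b t₁ t₂ δ l : ℕ) : Submodule M (ι → M) :=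
  span M {x | ∃ i ≤ δ - 2, ∃ l' ≤ l, x = powVec θ γ (b + i * t₁ + l' * t₂)}

section parityCheckSpan

variable {θ : M ≃+* M} {γ : ι → M} {b t₁ t₂ δ : ℕ}

theorem powVec_mem_parityCheckSpan {i l' l : ℕ} (hi : i ≤ δ - 2) (hl : l' ≤ l) :
    powVec θ γ (b + i * t₁ + l' * t₂) ∈ parityCheckSpan θ γ b t₁ t₂ δ l :=
  subset_span ⟨i, hi, l', hl, rfl⟩

theorem parityCheckSpan_mono : Monotone (parityCheckSpan θ γ b t₁ t₂ δ) :=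
  monotone_nat_of_le_succ fun _ => span_mono fun _ ⟨i, hi, l', hl', hx⟩ =>
    ⟨i, hi, l', hl'.trans (Nat.le_succ _), hx⟩

theorem parityCheckSpan_ne_top [Fintype ι] {r : ℕ} {c : ι → M} (hc : c ≠ 0)
    (hsyn : ∀ i ≤ δ - 2, ∀ l ≤ r, ∑ k, c k * (θ ^ (b + i * t₁ + l * t₂)) (γ k) = 0) :
    parityCheckSpan θ γ b t₁ t₂ δ r ≠ ⊤ := by
  classical
  intro htop
  have hker : parityCheckSpan θ γ b t₁ t₂ δ r ≤ LinearMap.ker (Fintype.linearCombination M c) :=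
    span_le.2 fun _ ⟨i, hi, l, hl, hx⟩ => by
      simpa [hx, powVec, Fintype.linearCombination_apply, mul_comm] using hsyn i hi l hl
  exact hc (funext fun k => by simpa using hker (htop ▸ mem_top : Pi.single k 1 ∈ _))

theorem parityCheckSpan_eq_top_of_succ_le [Fintype ι] (hγ : LinearIndependent (fixedSubfield θ) γ)
    (hn : 0 < orderOf θ) (ht₁ : (orderOf θ).gcd t₁ = 1) (ht₂ : (orderOf θ).gcd t₂ < δ) {l : ℕ}
    (h : parityCheckSpan θ γ b t₁ t₂ δ (l + 1) ≤ parityCheckSpan θ γ b t₁ t₂ δ l) :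
    parityCheckSpan θ γ b t₁ t₂ δ l = ⊤ := by
  have := RingHomInvPair.of_ringEquiv (θ ^ t₂)
  let shift : (ι → M) →ₛₗ[((θ ^ t₂ : M ≃+* M) : M →+* M)] (ι → M) :=
    { toFun := fun x k => (θ ^ t₂) (x k)
      map_add' := fun x y => funext fun k => map_add _ _ _
      map_smul' := fun a x => funext fun k => map_mul _ _ _ }
  have hshift (u : ℕ) : shift (powVec θ γ u) = powVec θ γ (u + t₂) := by
    funext k
    simp only [shift, LinearMap.coe_mk, AddHom.coe_mk, powVec, add_comm u, pow_add,
      RingAut.mul_apply]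
  have hstable :
      ∀ x ∈ parityCheckSpan θ γ b t₁ t₂ δ l, shift x ∈ parityCheckSpan θ γ b t₁ t₂ δ l := by
    refine fun x hx => h (span_le.2 ?_ (apply_mem_span_image_of_mem_span shift hx))
    rintro _ ⟨_, ⟨i, hi, l', hl', rfl⟩, rfl⟩
    rw [hshift, show b + i * t₁ + l' * t₂ + t₂ = b + i * t₁ + (l' + 1) * t₂ by ring]
    exact powVec_mem_parityCheckSpan hi (by omega)
  have hall (i : ℕ) (hi : i ≤ δ - 2) (l' : ℕ) :
      powVec θ γ (b + i * t₁ + l' * t₂) ∈ parityCheckSpan θ γ b t₁ t₂ δ l := by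
    induction l' with
    | zero => exact powVec_mem_parityCheckSpan hi (Nat.zero_le l)
    | succ l' ih =>
      rw [Nat.succ_mul, ← add_assoc, ← hshift]
      exact hstable _ ih
  rw [eq_top_iff, ← span_powVec_eq_top (φ := θ) (fun _ hx => hx) hγ, span_le]
  rintro _ ⟨u, -, rfl⟩
  obtain ⟨i, hi, l', hmod⟩ := Nat.exists_add_mul_add_mul_modEq hn ht₁ b u
  have hpow : θ ^ u = θ ^ (b + i * t₁ + l' * t₂) := pow_eq_pow_iff_modEq.2 hmod.symm
  rw [show powVec θ γ u = powVec θ γ (b + i * t₁ + l' * t₂) by unfold powVec; rw [hpow]]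
  exact hall i (by omega) l'

theorem min_le_finrank_parityCheckSpan_zero [Fintype ι] (hγ : LinearIndependent (fixedSubfield θ) γ)
    (ht₁ : t₁.Coprime (orderOf θ)) :
    min (δ - 1) (Fintype.card ι) ≤ finrank M (parityCheckSpan θ γ b t₁ t₂ δ 0) := by
  obtain ⟨s, -, hs⟩ := exists_subset_card_eq (s := (univ : Finset ι)) (n := min (δ - 1) _)
    ((min_le_right _ _).trans card_univ.ge)
  let ρ := LinearMap.funLeft M M ((↑) : s → ι)
  have hρ : map ρ (parityCheckSpan θ γ b t₁ t₂ δ 0) = ⊤ := by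
    rw [eq_top_iff, ← span_powVec_eq_top (fun _ => mem_fixedSubfield_of_pow_apply_eq ht₁)
      ((hγ.comp ((↑) : s → ι) Subtype.val_injective).pow_apply b), span_le]
    rintro _ ⟨i, hi, rfl⟩
    have hi : i ≤ δ - 2 := by simp only [Set.mem_Iio, Fintype.card_coe] at hi; omega
    refine ⟨_, powVec_mem_parityCheckSpan (i := i) hi le_rfl, funext fun k => ?_⟩
    simp only [ρ, LinearMap.funLeft_apply, Function.comp_apply, powVec, ← pow_mul,
      ← RingAut.mul_apply, ← pow_add]
    ring_nf
  calc min (δ - 1) (Fintype.card ι) = finrank M (s → M) := by simp [hs]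
    _ = finrank M (map ρ (parityCheckSpan θ γ b t₁ t₂ δ 0)) := by rw [hρ, finrank_top]
    _ ≤ finrank M (parityCheckSpan θ γ b t₁ t₂ δ 0) := finrank_map_le ρ _

end parityCheckSpan

theorem hartmann_tzeng_bound [Fintype ι] {θ : M ≃+* M} {γ : ι → M}
    (hγ : LinearIndependent (fixedSubfield θ) γ) (hn : 0 < orderOf θ) {b δ r t₁ t₂ : ℕ}
    (ht₁ : (orderOf θ).gcd t₁ = 1) (ht₂ : (orderOf θ).gcd t₂ < δ) {c : ι → M} (hc : c ≠ 0)
    (hsyn : ∀ i ≤ δ - 2, ∀ l ≤ r, ∑ k, c k * (θ ^ (b + i * t₁ + l * t₂)) (γ k) = 0) :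
    δ + r ≤ Fintype.card ι := by
  have hne := parityCheckSpan_ne_top hc hsyn
  have hlt (l : ℕ) (hl : l < r) :
      parityCheckSpan θ γ b t₁ t₂ δ l < parityCheckSpan θ γ b t₁ t₂ δ (l + 1) :=
    (parityCheckSpan_mono l.le_succ).lt_of_not_ge fun h => hne <|
      eq_top_mono (parityCheckSpan_mono hl.le) (parityCheckSpan_eq_top_of_succ_le hγ hn ht₁ ht₂ h)
  have hchain := finrank_add_le_finrank_of_forall_lt r hlt
  have htop := finrank_lt hne
  have hbot := min_le_finrank_parityCheckSpan_zero (b := b) (t₂ := t₂) (δ := δ) hγ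
    (Nat.coprime_comm.1 ht₁)
  rw [finrank_pi] at htop
  omega

end

theorem hartmann_tzeng_parity_check_general {M : Type*} [Field M] (θ : M ≃+* M) (n : ℕ)
    (hord : orderOf θ = n) (α : M) (hα : NormalBasis θ n α)
    (b δ r t₁ t₂ : ℕ)
    (ht₁ : Nat.gcd n t₁ = 1) (ht₂ : Nat.gcd n t₂ < δ)
    (c : Fin n → M) (hc0 : c ≠ 0)
    (hsyn : ∀ i ≤ δ - 2, ∀ l ≤ r,
      ∑ j : Fin n, c j * (θ ^ (b + i * t₁ + l * t₂ + (j : ℕ))) α = 0) :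
    δ + r ≤ hWt c := by
  classical
  subst hord
  obtain ⟨j₀, hj₀⟩ := Function.ne_iff.1 hc0
  have hsupp (u : ℕ) : ∑ j : {j // c j ≠ 0}, c j * (θ ^ u) ((θ ^ (j : ℕ)) α) =
      ∑ j, c j * (θ ^ (u + j)) α := by
    rw [← Fintype.sum_subtype_add_sum_subtype (c · ≠ 0), Fintype.sum_eq_zero
      (fun j : {j // ¬c j ≠ 0} => c j * (θ ^ (u + j)) α) fun j => by simp [not_not.1 j.2]]
    simp [pow_add, RingAut.mul_apply]
  have hwt : hWt c = Fintype.card {j // c j ≠ 0} := by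
    simp [hWt, Set.ncard_eq_toFinset_card', Fintype.card_subtype]
  exact hwt ▸ hartmann_tzeng_bound (hα.1.comp _ Subtype.val_injective) j₀.pos ht₁ ht₂
    (fun h => hj₀ (congrFun h ⟨j₀, hj₀⟩)) fun i hi l hl => (hsupp _).trans (hsyn i hi l hl)

/-- **parity-check form of the Hartmann–Tzeng bound.**
Let `θ` be an automorphism of `M` of finite order `n` and `α ∈ M` generate a normal basis of
`M` over `K = M^θ`. Let `b ≥ 0`, `δ ≥ 2`, `r ≥ 0`, `t₁, t₂` with `δ + r - 1 ≤ n`,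
`gcd(n, t₁) = 1` and `gcd(n, t₂) < δ`. If `c ∈ Mⁿ` is nonzero and
`Σ_j c_j · θ^{b + i·t₁ + ℓ·t₂ + j}(α) = 0` for all `0 ≤ i ≤ δ-2` and `0 ≤ ℓ ≤ r`,
then the Hamming weight of `c` is at least `δ + r`. -/
theorem hartmann_tzeng_parity_check {M : Type*} [Field M] (θ : M ≃+* M) (n : ℕ)
    (hord : orderOf θ = n) (α : M) (hα : NormalBasis θ n α)
    (b δ r t₁ t₂ : ℕ) (hδ : 2 ≤ δ) (hδr : δ + r ≤ n + 1)
    (ht₁ : Nat.gcd n t₁ = 1) (ht₂ : Nat.gcd n t₂ < δ)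
    (c : Fin n → M) (hc0 : c ≠ 0)
    (hsyn : ∀ i ≤ δ - 2, ∀ l ≤ r,
      ∑ j : Fin n, c j * (θ ^ (b + i * t₁ + l * t₂ + (j : ℕ))) α = 0) :
    δ + r ≤ hWt c :=
  hartmann_tzeng_parity_check_general θ n hord α hα b δ r t₁ t₂ ht₁ ht₂ c hc0 hsyn
end

section
/- Let g ∈ R be nonzero. If i ∈ T_β(g), i.e., x − θ^i(β) right-divides g in S, then also i + μ (taken modulo n) belongs to T_β(g). Consequently, if T_β(g) is nonempty then it is a union of cosets of the subgroup C_s = {0, μ, 2μ, …, (s−1)μ} of Z/nZ. -/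
/-! Skew polynomials over a field `M` twisted by a ring automorphism `θ` (`x·a = θ(a)·x`),
modeled as finitely supported functions `ℕ →₀ M` (coefficient of `xⁱ` at `i`),
with left-coefficient multiplication `(Σᵢ aᵢ xⁱ)·(Σⱼ bⱼ xʲ) = Σᵢⱼ aᵢ θⁱ(bⱼ) x^{i+j}`. -/

variable {M : Type*} [Field M]

/-! Applying `θ^μ` to coefficients is a ring automorphism of `M[x;θ]`, since `θ^μ` commutes
with `θ`. It fixes `g ∈ R` and sends `x - θⁱ(β)` to `x - θ^{i+μ}(β)`, so it turns a factorisation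
`g = q·(x - θⁱ(β))` into `g = q^{θ^μ}·(x - θ^{i+μ}(β))`. Exponents of `θ` only matter modulo
`n = ord θ`. -/

theorem pmap_eq_self_iff_inR (φ : M ≃+* M) (f : ℕ →₀ M) : pmap φ f = f ↔ inR φ f := by
  simp only [Finsupp.ext_iff, pmap, Finsupp.mapRange_apply, inR]

theorem pmap_Xsub (φ : M ≃+* M) (γ : M) : pmap φ (Xsub γ) = Xsub (φ γ) := by
  ext k
  simp only [pmap, Xsub, Finsupp.mapRange_apply, Finsupp.sub_apply, map_sub, Finsupp.single_apply]
  split_ifs <;> simp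

theorem pmap_sMul {θ φ : M ≃+* M} (h : Commute φ θ) (f g : ℕ →₀ M) :
    pmap φ (sMul θ f g) = sMul θ (pmap φ f) (pmap φ g) := by
  have hcomm (i : ℕ) (b : M) : φ ((θ ^ i) b) = (θ ^ i) (φ b) :=
    DFunLike.congr_fun (h.pow_right i).eq b
  let Φ : (ℕ →₀ M) →+ (ℕ →₀ M) := Finsupp.mapRange.addMonoidHom φ.toAddMonoidHom
  change Φ (sMul θ f g) = _
  simp only [sMul, pmap, map_finsuppSum]
  rw [Finsupp.sum_mapRange_index (by simp)]
  refine Finsupp.sum_congr fun i _ => ?_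
  rw [Finsupp.sum_mapRange_index (by simp)]
  refine Finsupp.sum_congr fun j _ => ?_
  change Finsupp.mapRange φ (map_zero φ) (Finsupp.single (i + j) (f i * (θ ^ i) (g j))) = _
  rw [Finsupp.mapRange_single, map_mul, hcomm]

theorem rdvd_pmap {θ φ : M ≃+* M} (h : Commute φ θ) {g f : ℕ →₀ M} (hgf : rdvd θ g f) :
    rdvd θ (pmap φ g) (pmap φ f) := by
  obtain ⟨q, rfl⟩ := hgf
  exact ⟨pmap φ q, pmap_sMul h q g⟩

theorem rdvd_Xsub_pow_add_mul {θ : M ≃+* M} {μ : ℕ} {g : ℕ →₀ M} (hg : inR (θ ^ μ) g)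
    {β : M} {i : ℕ} (hi : rdvd θ (Xsub ((θ ^ i) β)) g) (m : ℕ) :
    rdvd θ (Xsub ((θ ^ (i + m * μ)) β)) g := by
  induction m with
  | zero => simpa using hi
  | succ m ih =>
    have hmove := rdvd_pmap ((Commute.refl θ).pow_left μ) ih
    rwa [(pmap_eq_self_iff_inR _ g).2 hg, pmap_Xsub, ← RingAut.mul_apply, ← pow_add,
      add_comm μ, add_assoc, ← add_one_mul] at hmove

theorem defining_set_union_of_cosets_general {M : Type*} [Field M] (θ : M ≃+* M) (μ n : ℕ)
    (hord : orderOf θ = n) (β : M) (g : ℕ →₀ M) (hgR : inR (θ ^ μ) g) :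
    (∀ i < n, rdvd θ (Xsub ((θ ^ i) β)) g →
      rdvd θ (Xsub ((θ ^ ((i + μ) % n)) β)) g) ∧
    (∀ i < n, rdvd θ (Xsub ((θ ^ i) β)) g →
      ∀ m : ℕ, rdvd θ (Xsub ((θ ^ ((i + m * μ) % n)) β)) g) := by
  have hshift (m : ℕ) : ∀ i < n, rdvd θ (Xsub ((θ ^ i) β)) g →
      rdvd θ (Xsub ((θ ^ ((i + m * μ) % n)) β)) g := by
    intro i _ hi
    rw [← hord, pow_mod_orderOf]
    exact rdvd_Xsub_pow_add_mul hgR hi m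
  exact ⟨by simpa using hshift 1, fun i hi hdiv m => hshift m i hi hdiv⟩

/-- Setting: `θ` of order `n = μ·s`, `L = M^{θ^μ}`, `R = L[x;σ] ⊆ S = M[x;θ]`,
`α` generating a normal basis of `M/K` and `β = α⁻¹θ(α)`. If `g ∈ R` is nonzero and
`i ∈ T_β(g)` (i.e. `x - θⁱ(β)` right-divides `g` in `S`), then `(i + μ) mod n ∈ T_β(g)`;
consequently `T_β(g)` is a union of cosets of the subgroup `C_s = {0, μ, …, (s-1)μ}` of
`ℤ/nℤ`, i.e. it is stable under adding any multiple of `μ` modulo `n`. -/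
theorem defining_set_union_of_cosets {M : Type*} [Field M] (θ : M ≃+* M) (μ s n : ℕ)
    (hμ : 0 < μ) (hs : 0 < s) (hn : n = μ * s) (hord : orderOf θ = n)
    (α : M) (hα : NormalBasis θ n α) (β : M) (hβ : β = α⁻¹ * θ α)
    (g : ℕ →₀ M) (hg0 : g ≠ 0) (hgR : inR (θ ^ μ) g) :
    (∀ i < n, rdvd θ (Xsub ((θ ^ i) β)) g →
      rdvd θ (Xsub ((θ ^ ((i + μ) % n)) β)) g) ∧
    (∀ i < n, rdvd θ (Xsub ((θ ^ i) β)) g →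
      ∀ m : ℕ, rdvd θ (Xsub ((θ ^ ((i + m * μ) % n)) β)) g) :=
  defining_set_union_of_cosets_general θ μ n hord β g hgR
end
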